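/- (Main theorem, Theorem 1) Let X be the training-membership ground truth valued in {0,1}^D, let Y = f(X) be the model's output (a deterministic function of X, possibly after randomization independent of everything else), and let the attack prediction A satisfy the Markov chain X → Y → A. Let E_α be the indicator that the Hamming distance between X and A exceeds α, and p_α = P(E_α = 1). If D > log₂ V(α) where V(α) = Σ_{j=0}^{α} C(D,j), then p_α ≥ (H(X) − I(X; Y) − 1 − log₂ V(α)) / (D − log₂ V(α)). -/

import Mathlib

/-!
Fano's inequality through a coding argument. For weights `r x a > 0` with `∑ x, r x a ≤ 1`,
Gibbs' inequality bounds `H(X | Y)` by `E[-log₂ c(X, Y)]` for the sub-probability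
`c x y = E[r x A | Y = y]`. Since `A` is conditionally independent of `X` given `Y`, Jensen's
inequality for `-log₂` bounds this in turn by `E[-log₂ r(X, A)]`. Taking for `r` the two-part
code that spends one flag bit and then either `log₂ V(α)` bits (when `A` is within Hamming
distance `α` of `X`) or all `D` bits gives `H(X | Y) ≤ 1 + (1 - p_α) log₂ V(α) + p_α D`, which
rearranges to the theorem because `H(X) - I(X; Y) = H(X | Y)`.
-/

open Finset

noncomputable section

open scoped Classical

variable {Ω : Type*}

/-- Probability of the event `A` under the mass function `p` on a finite sample space. -/
def pr [Fintype Ω] (p : Ω → ℝ) (A : Ω → Prop) : ℝ :=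
  ∑ ω, if A ω then p ω else 0

/-- `p` is a probability mass function on the finite sample space `Ω`. -/
def IsPMF [Fintype Ω] (p : Ω → ℝ) : Prop :=
  (∀ ω, 0 ≤ p ω) ∧ ∑ ω, p ω = 1

/-- Shannon entropy (in bits) of the random variable `X` under `p`
(with the convention `0 · log 0 = 0` built into `Real.negMulLog`). -/
def ent [Fintype Ω] (p : Ω → ℝ) {S : Type*} [Fintype S] (X : Ω → S) : ℝ :=
  ∑ s, Real.negMulLog (pr p fun ω => X ω = s) / Real.log 2

/-- Conditional Shannon entropy `H(X | Y)` (in bits), via the chain rule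
`H(X | Y) = H(X, Y) - H(Y)`. -/
def condEnt [Fintype Ω] (p : Ω → ℝ) {S T : Type*} [Fintype S] [Fintype T]
    (X : Ω → S) (Y : Ω → T) : ℝ :=
  ent p (fun ω => (X ω, Y ω)) - ent p Y

/-- Mutual information `I(X ; Y)` (in bits). -/
def mutInf [Fintype Ω] (p : Ω → ℝ) {S T : Type*} [Fintype S] [Fintype T]
    (X : Ω → S) (Y : Ω → T) : ℝ :=
  ent p X + ent p Y - ent p fun ω => (X ω, Y ω)

/-- The conditional mass function of `p` given the event `A`
(the zero function if `A` has probability zero). -/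
def condPMF [Fintype Ω] (p : Ω → ℝ) (A : Ω → Prop) : Ω → ℝ :=
  fun ω => if A ω then p ω / pr p A else 0

/-- `X → Y → A` is a Markov chain: `A` is conditionally independent of `X` given `Y`
(stated in multiplied-out form to avoid division). -/
def MarkovChain [Fintype Ω] (p : Ω → ℝ) {S T U : Type*}
    (X : Ω → S) (Y : Ω → T) (A : Ω → U) : Prop :=
  ∀ (x : S) (y : T) (a : U), 0 < pr p (fun ω => X ω = x ∧ Y ω = y) →
    pr p (fun ω => A ω = a ∧ Y ω = y ∧ X ω = x) * pr p (fun ω => Y ω = y) =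
      pr p (fun ω => A ω = a ∧ Y ω = y) * pr p (fun ω => X ω = x ∧ Y ω = y)

/-- `V(α) = Σ_{j=0}^{α} C(D, j)`, the size of a Hamming ball of radius `α` in `{0,1}^D`. -/
def Vball (D α : ℕ) : ℕ :=
  ∑ j ∈ Finset.range (α + 1), D.choose j

/-- The binary entropy function (in bits). -/
def binEnt (q : ℝ) : ℝ :=
  -(q * Real.logb 2 q) - (1 - q) * Real.logb 2 (1 - q)

open Real

section Pr

variable [Fintype Ω] {p : Ω → ℝ}

lemma pr_congr {E F : Ω → Prop} (h : ∀ ω, E ω ↔ F ω) : pr p E = pr p F :=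
  Finset.sum_congr rfl fun ω _ => by simp only [h ω]

lemma pr_nonneg (hp : ∀ ω, 0 ≤ p ω) (E : Ω → Prop) : 0 ≤ pr p E :=
  Finset.sum_nonneg fun ω _ => by split_ifs <;> simp [hp ω]

lemma pr_mono (hp : ∀ ω, 0 ≤ p ω) {E F : Ω → Prop} (h : ∀ ω, E ω → F ω) :
    pr p E ≤ pr p F :=
  Finset.sum_le_sum fun ω _ => by
    by_cases hE : E ω
    · simp [hE, h ω hE]
    · split_ifs <;> simp [hp ω]

lemma le_pr (hp : ∀ ω, 0 ≤ p ω) {E : Ω → Prop} {ω : Ω} (hω : E ω) : p ω ≤ pr p E := by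
  have := Finset.single_le_sum (f := fun ω => if E ω then p ω else 0)
    (fun ω _ => by split_ifs <;> simp [hp ω]) (Finset.mem_univ ω)
  simpa [pr, hω] using this

lemma sum_pr_eq_and {S : Type*} [Fintype S] (Z : Ω → S) (E : Ω → Prop) :
    ∑ s, pr p (fun ω => Z ω = s ∧ E ω) = pr p E := by
  unfold pr
  rw [Finset.sum_comm]
  refine Finset.sum_congr rfl fun ω _ => ?_
  by_cases hE : E ω <;> simp [hE]

lemma sum_pr_mul_eq_sum_mul {S : Type*} [Fintype S] (W : Ω → S) (φ : S → ℝ) :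
    ∑ s, pr p (fun ω => W ω = s) * φ s = ∑ ω, p ω * φ (W ω) := by
  simp_rw [pr, Finset.sum_mul, ite_mul, zero_mul]
  rw [Finset.sum_comm]
  simp

lemma sum_pr_eq_one (hp : ∑ ω, p ω = 1) {S : Type*} [Fintype S] (W : Ω → S) :
    ∑ s, pr p (fun ω => W ω = s) = 1 := by
  simpa [hp] using sum_pr_mul_eq_sum_mul (p := p) W fun _ => 1

lemma sum_mul_ite_eq (hp : ∑ ω, p ω = 1) (E : Ω → Prop) [DecidablePred E] (a b : ℝ) :
    ∑ ω, p ω * (if E ω then a else b) = pr p E * a + (1 - pr p E) * b := by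
  have h : ∀ ω, p ω * (if E ω then a else b) = b * p ω + (a - b) * if E ω then p ω else 0 :=
    fun ω => by split_ifs <;> ring
  have hpr : pr p E = ∑ ω, if E ω then p ω else 0 := by
    unfold pr
    congr!
  rw [hpr, Finset.sum_congr rfl fun ω _ => h ω, Finset.sum_add_distrib, ← Finset.mul_sum,
    ← Finset.mul_sum, hp]
  ring

lemma exists_pos_of_pr_pos {E : Ω → Prop} (h : 0 < pr p E) : ∃ ω, E ω ∧ 0 < p ω := by
  obtain ⟨ω, -, hω⟩ :=
    Finset.exists_lt_of_sum_lt (f := fun _ => (0 : ℝ)) (by simpa [pr] using h)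
  by_cases hE : E ω
  · exact ⟨ω, hE, by simpa [hE] using hω⟩
  · simp [hE] at hω

lemma sum_mul_le_sum_mul_of_pos (hp : ∀ ω, 0 ≤ p ω) {f g : Ω → ℝ}
    (h : ∀ ω, 0 < p ω → f ω ≤ g ω) : ∑ ω, p ω * f ω ≤ ∑ ω, p ω * g ω :=
  Finset.sum_le_sum fun ω _ => by
    rcases (hp ω).eq_or_lt with h0 | h0
    · simp [← h0]
    · exact mul_le_mul_of_nonneg_left (h ω h0) h0.le

end Pr

lemma sum_negMulLog_le_sum_mul_neg_log {ι : Type*} [Fintype ι] {f C : ι → ℝ}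
    (hf0 : ∀ i, 0 ≤ f i) (hf1 : ∑ i, f i = 1) (hC0 : ∀ i, 0 ≤ C i) (hC1 : ∑ i, C i ≤ 1)
    (hfC : ∀ i, 0 < f i → 0 < C i) :
    ∑ i, negMulLog (f i) ≤ ∑ i, f i * -log (C i) := by
  have key : ∀ i, negMulLog (f i) ≤ f i * -log (C i) + (C i - f i) := by
    intro i
    rcases (hf0 i).eq_or_lt with h | h
    · simp [← h, hC0 i]
    · have hC := hfC i h
      have hlog := mul_le_mul_of_nonneg_left (log_le_sub_one_of_pos (div_pos hC h)) h.le
      have hcancel : f i * (C i / f i - 1) = C i - f i := by field_simp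
      rw [log_div hC.ne' h.ne', hcancel] at hlog
      rw [negMulLog]
      linarith
  calc ∑ i, negMulLog (f i) ≤ ∑ i, (f i * -log (C i) + (C i - f i)) :=
        Finset.sum_le_sum fun i _ => key i
    _ = ∑ i, f i * -log (C i) + (∑ i, C i - ∑ i, f i) := by
        rw [Finset.sum_add_distrib, Finset.sum_sub_distrib]
    _ ≤ ∑ i, f i * -log (C i) := by linarith

section Entropy

variable [Fintype Ω] {p : Ω → ℝ} {S T : Type*} [Fintype S] [Fintype T]

lemma ent_eq_sum_neg_logb (W : Ω → S) :
    ent p W = ∑ ω, p ω * -logb 2 (pr p fun ω' => W ω' = W ω) := by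
  rw [ent, ← sum_pr_mul_eq_sum_mul W fun s => -logb 2 (pr p fun ω' => W ω' = s)]
  refine Finset.sum_congr rfl fun s _ => ?_
  rw [negMulLog, logb]
  ring

lemma ent_le_sum_neg_logb (hp : IsPMF p) (W : Ω → S) {C : S → ℝ} (hC0 : ∀ s, 0 ≤ C s)
    (hC1 : ∑ s, C s ≤ 1) (hC : ∀ ω, 0 < p ω → 0 < C (W ω)) :
    ent p W ≤ ∑ ω, p ω * -logb 2 (C (W ω)) := by
  have hgibbs := sum_negMulLog_le_sum_mul_neg_log (f := fun s => pr p fun ω => W ω = s)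
    (fun s => pr_nonneg hp.1 _) (sum_pr_eq_one hp.2 W) hC0 hC1 fun s hs => by
      obtain ⟨ω, rfl, hω⟩ := exists_pos_of_pr_pos hs
      exact hC ω hω
  have hbits : ∑ s, pr p (fun ω => W ω = s) * -logb 2 (C s)
      = (∑ s, pr p (fun ω => W ω = s) * -log (C s)) / log 2 := by
    rw [Finset.sum_div]
    exact Finset.sum_congr rfl fun s _ => by rw [logb]; ring
  rw [ent, ← sum_pr_mul_eq_sum_mul W fun s => -logb 2 (C s), ← Finset.sum_div, hbits]
  exact div_le_div_of_nonneg_right hgibbs (log_nonneg one_le_two)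

lemma condEnt_le_sum_neg_logb (hp : IsPMF p) (X : Ω → S) (Y : Ω → T) {c : S → T → ℝ}
    (hc0 : ∀ x y, 0 ≤ c x y) (hc1 : ∀ y, ∑ x, c x y ≤ 1)
    (hc : ∀ ω, 0 < p ω → 0 < c (X ω) (Y ω)) :
    condEnt p X Y ≤ ∑ ω, p ω * -logb 2 (c (X ω) (Y ω)) := by
  set g : T → ℝ := fun y => pr p fun ω => Y ω = y
  have hg : ∀ ω, 0 < p ω → 0 < g (Y ω) := fun ω hω => hω.trans_le (le_pr hp.1 rfl)
  have hjoint := ent_le_sum_neg_logb hp (fun ω => (X ω, Y ω))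
    (C := fun z => g z.2 * c z.1 z.2) (fun z => mul_nonneg (pr_nonneg hp.1 _) (hc0 _ _))
    (by
      rw [Fintype.sum_prod_type_right]
      calc ∑ y, ∑ x, g y * c x y = ∑ y, g y * ∑ x, c x y := by simp_rw [Finset.mul_sum]
        _ ≤ ∑ y, g y := Finset.sum_le_sum fun y _ =>
            mul_le_of_le_one_right (pr_nonneg hp.1 _) (hc1 y)
        _ = 1 := sum_pr_eq_one hp.2 Y)
    fun ω hω => mul_pos (hg ω hω) (hc ω hω)
  rw [condEnt, ent_eq_sum_neg_logb Y, sub_le_iff_le_add, ← Finset.sum_add_distrib]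
  calc ent p (fun ω => (X ω, Y ω)) ≤ ∑ ω, p ω * -logb 2 (g (Y ω) * c (X ω) (Y ω)) := hjoint
    _ ≤ ∑ ω, p ω * (-logb 2 (c (X ω) (Y ω)) + -logb 2 (g (Y ω))) :=
        sum_mul_le_sum_mul_of_pos hp.1 fun ω hω => by
          rw [logb_mul (hg ω hω).ne' (hc ω hω).ne']
          linarith
    _ = _ := by simp only [mul_add, g]

end Entropy

section Markov

variable [Fintype Ω] {p : Ω → ℝ} {S T U : Type*}

/-- The conditional expectation `E[φ(A) | Y = y]`, which is `0` when `P(Y = y) = 0`. -/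
def condAvg [Fintype U] (p : Ω → ℝ) (A : Ω → U) (Y : Ω → T) (φ : U → ℝ) (y : T) : ℝ :=
  ∑ a, pr p (fun ω => A ω = a ∧ Y ω = y) / pr p (fun ω => Y ω = y) * φ a

lemma pr_and_div_nonneg (hp : ∀ ω, 0 ≤ p ω) (A : Ω → U) (Y : Ω → T) (a : U) (y : T) :
    0 ≤ pr p (fun ω => A ω = a ∧ Y ω = y) / pr p (fun ω => Y ω = y) :=
  div_nonneg (pr_nonneg hp _) (pr_nonneg hp _)

lemma sum_pr_and_div [Fintype U] (A : Ω → U) (Y : Ω → T) (y : T) :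
    ∑ a, pr p (fun ω => A ω = a ∧ Y ω = y) / pr p (fun ω => Y ω = y) =
      pr p (fun ω => Y ω = y) / pr p (fun ω => Y ω = y) := by
  rw [← Finset.sum_div, sum_pr_eq_and]

lemma condAvg_nonneg [Fintype U] (hp : ∀ ω, 0 ≤ p ω) (A : Ω → U) (Y : Ω → T) {φ : U → ℝ}
    (hφ : ∀ a, 0 ≤ φ a) (y : T) : 0 ≤ condAvg p A Y φ y :=
  Finset.sum_nonneg fun a _ => mul_nonneg (pr_and_div_nonneg hp A Y a y) (hφ a)

lemma condAvg_pos [Fintype U] (hp : ∀ ω, 0 ≤ p ω) (A : Ω → U) {Y : Ω → T} {φ : U → ℝ}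
    {y : T} (hy : 0 < pr p fun ω => Y ω = y) (hφ : ∀ a, 0 < φ a) : 0 < condAvg p A Y φ y := by
  have hw : ∑ a, pr p (fun ω => A ω = a ∧ Y ω = y) / pr p (fun ω => Y ω = y) = 1 := by
    rw [sum_pr_and_div, div_self hy.ne']
  obtain ⟨a, -, ha⟩ := Finset.exists_lt_of_sum_lt (s := Finset.univ) (f := fun _ => (0 : ℝ))
    (by rw [hw]; simp)
  exact Finset.sum_pos'
    (fun a _ => mul_nonneg (pr_and_div_nonneg hp A Y _ y) (hφ a).le)
    ⟨a, Finset.mem_univ a, mul_pos ha (hφ a)⟩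

lemma sum_condAvg_le_one [Fintype S] [Fintype U] (hp : ∀ ω, 0 ≤ p ω) (A : Ω → U) (Y : Ω → T)
    {r : S → U → ℝ} (hr : ∀ a, ∑ x, r x a ≤ 1) (y : T) : ∑ x, condAvg p A Y (r x) y ≤ 1 := by
  set w : U → ℝ := fun a => pr p (fun ω => A ω = a ∧ Y ω = y) / pr p (fun ω => Y ω = y)
  calc ∑ x, condAvg p A Y (r x) y = ∑ a, w a * ∑ x, r x a := by
        simp_rw [condAvg, Finset.mul_sum]
        exact Finset.sum_comm
    _ ≤ ∑ a, w a := Finset.sum_le_sum fun a _ => mul_le_of_le_one_right (pr_and_div_nonneg hp A Y a y) (hr a)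
    _ ≤ 1 := (sum_pr_and_div A Y y).trans_le (div_self_le_one _)

lemma neg_logb_condAvg_le [Fintype U] (hp : ∀ ω, 0 ≤ p ω) (A : Ω → U) {Y : Ω → T}
    {φ : U → ℝ} {y : T} (hy : 0 < pr p fun ω => Y ω = y) (hφ : ∀ a, 0 < φ a) :
    -logb 2 (condAvg p A Y φ y) ≤ condAvg p A Y (fun a => -logb 2 (φ a)) y := by
  set w : U → ℝ := fun a => pr p (fun ω => A ω = a ∧ Y ω = y) / pr p (fun ω => Y ω = y)
  have hjensen : ∑ a, w a * log (φ a) ≤ log (∑ a, w a * φ a) := by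
    simpa using strictConcaveOn_log_Ioi.concaveOn.le_map_sum (t := Finset.univ) (w := w)
      (p := φ) (fun a _ => pr_and_div_nonneg hp A Y _ y)
      (by rw [sum_pr_and_div, div_self hy.ne']) fun a _ => hφ a
  have hbits : ∑ a, w a * -logb 2 (φ a) = -(∑ a, w a * log (φ a)) / log 2 := by
    rw [neg_div, Finset.sum_div, ← Finset.sum_neg_distrib]
    exact Finset.sum_congr rfl fun a _ => by rw [logb]; ring
  change -logb 2 (∑ a, w a * φ a) ≤ ∑ a, w a * -logb 2 (φ a)
  rw [hbits, logb, ← neg_div]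
  exact div_le_div_of_nonneg_right (neg_le_neg hjensen) (log_nonneg one_le_two)

variable {X : Ω → S} {Y : Ω → T} {A : Ω → U}

lemma MarkovChain.pr_eq_mul (hp : ∀ ω, 0 ≤ p ω) (hM : MarkovChain p X Y A) (x : S) (y : T)
    (a : U) :
    pr p (fun ω => A ω = a ∧ Y ω = y ∧ X ω = x) = pr p (fun ω => X ω = x ∧ Y ω = y) *
      (pr p (fun ω => A ω = a ∧ Y ω = y) / pr p (fun ω => Y ω = y)) := by
  rcases (pr_nonneg hp fun ω => X ω = x ∧ Y ω = y).eq_or_lt with h | h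
  · rw [← h, zero_mul]
    exact le_antisymm (h ▸ pr_mono hp fun ω hω => ⟨hω.2.2, hω.2.1⟩) (pr_nonneg hp _)
  · have hy : 0 < pr p fun ω => Y ω = y := h.trans_le (pr_mono hp fun ω hω => hω.2)
    have := hM x y a h
    field_simp
    linarith

lemma MarkovChain.sum_mul_eq_sum_mul_condAvg [Fintype S] [Fintype T] [Fintype U]
    (hp : ∀ ω, 0 ≤ p ω) (hM : MarkovChain p X Y A) (ψ : S → U → ℝ) :
    ∑ ω, p ω * ψ (X ω) (A ω) = ∑ ω, p ω * condAvg p A Y (ψ (X ω)) (Y ω) := by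
  calc ∑ ω, p ω * ψ (X ω) (A ω)
      = ∑ z : S × T × U, pr p (fun ω => (X ω, Y ω, A ω) = z) * ψ z.1 z.2.2 :=
        (sum_pr_mul_eq_sum_mul (fun ω => (X ω, Y ω, A ω)) fun z => ψ z.1 z.2.2).symm
    _ = ∑ x, ∑ y, ∑ a, pr p (fun ω => A ω = a ∧ Y ω = y ∧ X ω = x) * ψ x a := by
        simp only [Fintype.sum_prod_type]
        refine Finset.sum_congr rfl fun x _ => Finset.sum_congr rfl fun y _ =>
          Finset.sum_congr rfl fun a _ => ?_
        congr 1
        exact pr_congr fun ω => by simp only [Prod.mk.injEq]; tauto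
    _ = ∑ x, ∑ y, pr p (fun ω => X ω = x ∧ Y ω = y) * condAvg p A Y (ψ x) y := by
        simp_rw [hM.pr_eq_mul hp, condAvg, Finset.mul_sum, mul_assoc]
    _ = ∑ z : S × T, pr p (fun ω => (X ω, Y ω) = z) * condAvg p A Y (ψ z.1) z.2 := by
        simp only [Fintype.sum_prod_type, Prod.mk.injEq]
    _ = ∑ ω, p ω * condAvg p A Y (ψ (X ω)) (Y ω) :=
        sum_pr_mul_eq_sum_mul (fun ω => (X ω, Y ω)) fun z => condAvg p A Y (ψ z.1) z.2

theorem condEnt_le_sum_neg_logb_of_markovChain [Fintype S] [Fintype T] [Fintype U]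
    (hp : IsPMF p) (hM : MarkovChain p X Y A) {r : S → U → ℝ} (hr0 : ∀ x a, 0 < r x a)
    (hr1 : ∀ a, ∑ x, r x a ≤ 1) :
    condEnt p X Y ≤ ∑ ω, p ω * -logb 2 (r (X ω) (A ω)) := by
  have hY : ∀ ω, 0 < p ω → 0 < pr p fun ω' => Y ω' = Y ω :=
    fun ω hω => hω.trans_le (le_pr hp.1 rfl)
  calc condEnt p X Y ≤ ∑ ω, p ω * -logb 2 (condAvg p A Y (r (X ω)) (Y ω)) :=
        condEnt_le_sum_neg_logb hp X Y (c := fun x y => condAvg p A Y (r x) y)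
          (fun x y => condAvg_nonneg hp.1 A Y (fun a => (hr0 x a).le) y)
          (sum_condAvg_le_one hp.1 A Y hr1)
          fun ω hω => condAvg_pos hp.1 A (hY ω hω) (hr0 _)
    _ ≤ ∑ ω, p ω * condAvg p A Y (fun a => -logb 2 (r (X ω) a)) (Y ω) :=
        sum_mul_le_sum_mul_of_pos hp.1 fun ω hω =>
          neg_logb_condAvg_le hp.1 A (hY ω hω) (hr0 _)
    _ = ∑ ω, p ω * -logb 2 (r (X ω) (A ω)) :=
        (hM.sum_mul_eq_sum_mul_condAvg hp.1 fun x a => -logb 2 (r x a)).symm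

end Markov

lemma card_hammingBall_le {ι : Type*} [Fintype ι] [DecidableEq ι] (a : ι → Bool) (α : ℕ) :
    #{x | hammingDist x a ≤ α} ≤ Vball (Fintype.card ι) α := by
  let F : (ι → Bool) → Finset ι := fun x => {i | x i ≠ a i}
  have hF : Function.Injective F := fun x x' h => funext fun i => by
    have := Finset.ext_iff.1 h i
    simp only [F, Finset.mem_filter, Finset.mem_univ, true_and] at this
    revert this
    cases x i <;> cases x' i <;> cases a i <;> simp
  calc #{x | hammingDist x a ≤ α}
      ≤ #((range (α + 1)).biUnion fun j => powersetCard j (univ : Finset ι)) :=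
        card_le_card_of_injOn F (fun x hx => by
          simp only [coe_filter, mem_univ, true_and, Set.mem_ofPred_eq] at hx
          simp only [coe_biUnion, coe_range, Set.mem_Iio, Set.mem_iUnion, mem_coe,
            mem_powersetCard, subset_univ, true_and, exists_prop]
          exact ⟨_, Nat.lt_succ_of_le hx, rfl⟩) hF.injOn
    _ ≤ ∑ j ∈ range (α + 1), #(powersetCard j (univ : Finset ι)) := card_biUnion_le
    _ = Vball (Fintype.card ι) α := by simp [Vball, card_powersetCard]

lemma Vball_pos (D α : ℕ) : 0 < Vball D α :=
  Finset.sum_pos' (fun _ _ => Nat.zero_le _) ⟨0, by simp, by simp⟩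

/-- The Kraft weights `2^(-ℓ)` of a two-part code for `x` given `a`: a flag bit, followed either
by the index of `x` in the Hamming ball of radius `α` around `a` or by all `D` bits of `x`. -/
def ballCodeWeight (D α : ℕ) (x a : Fin D → Bool) : ℝ :=
  if α < hammingDist x a then ((2 : ℝ) ^ (D + 1))⁻¹ else (2 * (Vball D α : ℝ))⁻¹

lemma ballCodeWeight_pos (D α : ℕ) (x a : Fin D → Bool) : 0 < ballCodeWeight D α x a := by
  have := Vball_pos D α
  unfold ballCodeWeight
  split_ifs <;> positivity

lemma sum_ballCodeWeight_le_one (D α : ℕ) (a : Fin D → Bool) :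
    ∑ x, ballCodeWeight D α x a ≤ 1 := by
  have hV : (0 : ℝ) < Vball D α := Nat.cast_pos.2 (Vball_pos D α)
  have hfar : (#{x | α < hammingDist x a} : ℝ) ≤ 2 ^ D := by
    exact_mod_cast (card_filter_le _ _).trans_eq (by simp)
  have hnear : (#{x | ¬α < hammingDist x a} : ℝ) ≤ Vball D α := by
    simp only [not_lt]
    exact_mod_cast (card_hammingBall_le a α).trans_eq (by simp)
  simp only [ballCodeWeight, sum_ite, sum_const, nsmul_eq_mul]
  calc (#{x | α < hammingDist x a} : ℝ) * ((2 : ℝ) ^ (D + 1))⁻¹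
        + #{x | ¬α < hammingDist x a} * (2 * (Vball D α : ℝ))⁻¹
      ≤ 2 ^ D * ((2 : ℝ) ^ (D + 1))⁻¹ + Vball D α * (2 * (Vball D α : ℝ))⁻¹ := by gcongr
    _ = 1 := by field_simp; ring

lemma neg_logb_ballCodeWeight (D α : ℕ) (x a : Fin D → Bool) :
    -logb 2 (ballCodeWeight D α x a) =
      if α < hammingDist x a then (D : ℝ) + 1 else 1 + logb 2 (Vball D α) := by
  have hV : (Vball D α : ℝ) ≠ 0 := Nat.cast_ne_zero.2 (Vball_pos D α).ne'
  unfold ballCodeWeight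
  split_ifs
  · rw [logb_inv, neg_neg, logb_pow, logb_self_eq_one one_lt_two]
    push_cast
    ring
  · rw [logb_inv, neg_neg, logb_mul two_ne_zero hV, logb_self_eq_one one_lt_two]

theorem stmt12_general [Fintype Ω] {D : ℕ} {T : Type*} [Fintype T]
    (p : Ω → ℝ) (hp : IsPMF p)
    (X : Ω → (Fin D → Bool)) (Y : Ω → T) (A : Ω → (Fin D → Bool))
    (hM : MarkovChain p X Y A) (α : ℕ)
    (pα : ℝ) (hpα : pα = pr p (fun ω => α < hammingDist (X ω) (A ω)))
    (hD : Real.logb 2 (Vball D α) < D) :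
    (ent p X - mutInf p X Y - 1 - Real.logb 2 (Vball D α)) /
        ((D : ℝ) - Real.logb 2 (Vball D α)) ≤ pα := by
  have hfano := condEnt_le_sum_neg_logb_of_markovChain hp hM (ballCodeWeight_pos D α)
    (sum_ballCodeWeight_le_one D α)
  simp_rw [neg_logb_ballCodeWeight] at hfano
  rw [sum_mul_ite_eq hp.2 fun ω => α < hammingDist (X ω) (A ω), ← hpα] at hfano
  have hcondEnt : ent p X - mutInf p X Y = condEnt p X Y := by
    rw [mutInf, condEnt]
    ring
  rw [div_le_iff₀ (sub_pos.2 hD), hcondEnt]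
  linear_combination hfano

/-- Main theorem (Theorem 1): with the Markov chain `X → Y → A`, `X, A` valued in `{0,1}^D`,
`E_α` the indicator that the Hamming distance between `X` and `A` exceeds `α`, and
`p_α = P(E_α = 1)`, if `D > log₂ V(α)` then
`p_α ≥ (H(X) - I(X;Y) - 1 - log₂ V(α)) / (D - log₂ V(α))`. -/
theorem stmt12 [Fintype Ω] {D : ℕ} {T : Type*} [Fintype T]
    (p : Ω → ℝ) (hp : IsPMF p)
    (X : Ω → (Fin D → Bool)) (Y : Ω → T) (A : Ω → (Fin D → Bool))
    (hM : MarkovChain p X Y A) (α : ℕ) (hα : α < D)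
    (pα : ℝ) (hpα : pα = pr p (fun ω => α < hammingDist (X ω) (A ω)))
    (hD : Real.logb 2 (Vball D α) < D) :
    (ent p X - mutInf p X Y - 1 - Real.logb 2 (Vball D α)) /
        ((D : ℝ) - Real.logb 2 (Vball D α)) ≤ pα :=
  stmt12_general p hp X Y A hM α pα hpα hD
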